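/- Let Γ be a finite connected loopless graph with genus weights p : V → ℕ, and suppose (Γ, p) is not a cusp graph (i.e. not all vertices have valency 2 with p ≡ 0). Fix a vertex i with valency v_i ≥ 2. Then as (n, e) ranges over all solutions of the adjunction system e_j n_j = v_j + 2p_j − 2 + Σ_{k≠j} e_{jk} n_k (for all j) with Q_{(Γ,e)} negative definite, the value e_i takes only finitely many values. -/

import Mathlib

open Finset

/-!
Dickson's lemma reduces the claim to a bound on `e i` over the solutions `(n, e)` whose `e`
dominates that of a fixed solution `(n₀, e₀)`. Negative definiteness makes `diag e₀ - W` an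
M-matrix, so `(diag e₀ - W) x ≥ 0` forces `x ≥ 0`; applied to `x = n₀ - n` this gives `n ≤ n₀`.
Outside the cusp case `n i ≥ 1`, because `n = 0` at a vertex of valency `≥ 2` propagates
along edges and forces every vertex to have valency 2 and genus 0. Hence
`e i ≤ e i n i = v_i + 2p_i - 2 + ∑ₖ w_{ik} n_k ≤ v_i + 2p_i + ∑ₖ w_{ik} n₀_k`.
-/

theorem bddAbove_image_of_bddAbove_image_inter_Ici {α β : Type*} [PartialOrder α]
    [WellQuasiOrderedLE α] [Preorder β] [IsDirectedOrder β] [Nonempty β]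
    {f : α → β} {s : Set α} (h : ∀ a ∈ s, BddAbove (f '' (s ∩ Set.Ici a))) :
    BddAbove (f '' s) := by
  have hmin : {a | Minimal (· ∈ s) a}.Finite :=
    WellQuasiOrderedLE.finite_of_isAntichain (setOfPred_minimal_antichain _)
  refine ((hmin.bddAbove_biUnion (S := fun a => f '' (s ∩ Set.Ici a))).2
    fun a ha => h a ha.1).mono ?_
  rintro _ ⟨b, hb, rfl⟩
  obtain ⟨a, hab, ha⟩ := exists_minimal_le_of_wellFoundedLT (· ∈ s) b hb
  exact Set.mem_biUnion ha ⟨b, ⟨hb, hab⟩, rfl⟩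

theorem SimpleGraph.Preconnected.of_forall_adj {V : Type*} {G : SimpleGraph V}
    (hG : G.Preconnected) {P : V → Prop} (hstep : ∀ u v, G.Adj u v → P u → P v) {i : V}
    (hi : P i) (j : V) : P j := by
  obtain ⟨walk⟩ := hG i j
  induction walk with
  | nil => exact hi
  | cons hadj _ ih => exact ih (hstep _ _ hadj hi)

section MMatrix

variable {V : Type*} [Fintype V] [DecidableEq V]

def IsNegDefForm (a : V → V → ℝ) (d : V → ℝ) : Prop :=
  ∀ x : V → ℝ, x ≠ 0 → ∑ j, x j * (-d j * x j + ∑ k ∈ univ.erase j, a j k * x k) < 0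

/-- The form is nonnegative at the negative part `x⁻` of `x`, so `x⁻ = 0`. -/
theorem IsNegDefForm.nonneg_of_sum_le {a : V → V → ℝ} {d : V → ℝ} (hQ : IsNegDefForm a d)
    (ha : ∀ j k, 0 ≤ a j k) {x : V → ℝ}
    (hx : ∀ j, ∑ k ∈ univ.erase j, a j k * x k ≤ d j * x j) : 0 ≤ x := by
  by_contra hx0
  refine (hQ x⁻ (by rwa [Ne, negPart_eq_zero])).not_ge (sum_nonneg fun j _ => ?_)
  rcases (negPart_nonneg (x j)).eq_or_lt with hj | hj
  · simp [← hj]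
  · have hxj : (x j)⁻ = -x j := negPart_eq_neg.2 (negPart_pos_iff.1 hj).le
    have hsum : ∑ k ∈ univ.erase j, a j k * -x k ≤ ∑ k ∈ univ.erase j, a j k * (x k)⁻ :=
      sum_le_sum fun k _ => mul_le_mul_of_nonneg_left (neg_le_negPart _) (ha j k)
    simp only [mul_neg, sum_neg_distrib] at hsum
    simp only [Pi.negPart_apply]
    refine mul_nonneg hj.le ?_
    rw [hxj]
    linarith [hx j]

end MMatrix

section Adjunction

variable {V : Type*} [Fintype V] [DecidableEq V] {w : V → V → ℕ} {p n e n₀ e₀ : V → ℕ}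

def valency (w : V → V → ℕ) (j : V) : ℕ := ∑ k ∈ univ.erase j, w j k

def IsAdjunctionSolution (w : V → V → ℕ) (p n e : V → ℕ) : Prop :=
  ∀ j, (e j : ℤ) * n j = (∑ k ∈ univ.erase j, (w j k : ℤ)) + 2 * p j - 2
    + ∑ k ∈ univ.erase j, (w j k : ℤ) * n k

theorem IsAdjunctionSolution.le_of_le (h₀ : IsAdjunctionSolution w p n₀ e₀)
    (hQ : IsNegDefForm (fun j k => (w j k : ℝ)) (fun j => (e₀ j : ℝ)))
    (h : IsAdjunctionSolution w p n e) (he : e₀ ≤ e) : n ≤ n₀ := by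
  have hnn := hQ.nonneg_of_sum_le (fun j k => Nat.cast_nonneg (w j k))
    (x := fun j => (n₀ j : ℝ) - n j) fun j => by
      have h₀j : (e₀ j : ℝ) * n₀ j = (∑ k ∈ univ.erase j, (w j k : ℝ)) + 2 * p j - 2
          + ∑ k ∈ univ.erase j, (w j k : ℝ) * n₀ k := by exact_mod_cast h₀ j
      have hj : (e j : ℝ) * n j = (∑ k ∈ univ.erase j, (w j k : ℝ)) + 2 * p j - 2
          + ∑ k ∈ univ.erase j, (w j k : ℝ) * n k := by exact_mod_cast h j
      have hgap : (0 : ℝ) ≤ ((e j : ℝ) - e₀ j) * n j :=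
        mul_nonneg (sub_nonneg.2 (by exact_mod_cast he j)) (Nat.cast_nonneg _)
      simp only [mul_sub, sum_sub_distrib]
      linarith
  exact fun j => Nat.cast_le.1 (sub_nonneg.1 (hnn j))

theorem IsAdjunctionSolution.valency_add_eq_two (h : IsAdjunctionSolution w p n e) {u : V}
    (hu : n u = 0) : valency w u + 2 * p u + ∑ k ∈ univ.erase u, w u k * n k = 2 := by
  have hu' := h u
  rw [hu, Nat.cast_zero, mul_zero] at hu'
  unfold valency
  zify
  linarith

theorem IsAdjunctionSolution.two_le_valency (h : IsAdjunctionSolution w p n e) {u m : V}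
    (hu : n u = 0) (hmu : m ≠ u) (hw : 0 < w u m) (hm : n m = 0) : 2 ≤ valency w u := by
  have hbal := h.valency_add_eq_two hu
  have hmem : m ∈ univ.erase u := mem_erase.2 ⟨hmu, mem_univ m⟩
  have hsplit : w u m + ∑ k ∈ (univ.erase u).erase m, w u k = valency w u :=
    add_sum_erase _ _ hmem
  -- a vertex of valency 1 next to `m` would have `∑ w n = w_{um} n_m = 0`, against parity
  by_contra hlt
  have hrest : ∀ k ∈ (univ.erase u).erase m, w u k = 0 := sum_eq_zero_iff.1 (by omega)
  have hzero : ∑ k ∈ univ.erase u, w u k * n k = 0 := by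
    rw [← add_sum_erase _ _ hmem, hm, mul_zero, zero_add]
    exact sum_eq_zero fun k hk => by rw [hrest k hk, zero_mul]
  omega

theorem IsAdjunctionSolution.eq_zero_of_adj (h : IsAdjunctionSolution w p n e) {u v : V}
    (hu : n u = 0) (hvu : v ≠ u) (hw : 0 < w u v) (hu2 : 2 ≤ valency w u) : n v = 0 := by
  have hzero : ∑ k ∈ univ.erase u, w u k * n k = 0 := by
    have := h.valency_add_eq_two hu
    omega
  exact (mul_eq_zero.1 (sum_eq_zero_iff.1 hzero v (mem_erase.2 ⟨hvu, mem_univ v⟩))).resolve_left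
    hw.ne'

theorem IsAdjunctionSolution.cusp_of_eq_zero (hsymm : ∀ i j, w i j = w j i)
    (hconn : (SimpleGraph.fromRel (fun i j => 0 < w i j)).Connected)
    (h : IsAdjunctionSolution w p n e) {i : V} (hi : n i = 0) (hvi : 2 ≤ valency w i) :
    ∀ j, valency w j = 2 ∧ p j = 0 := by
  have hstep : ∀ u v, (SimpleGraph.fromRel (fun i j => 0 < w i j)).Adj u v →
      n u = 0 ∧ 2 ≤ valency w u → n v = 0 ∧ 2 ≤ valency w v := by
    rintro u v ⟨hne, huv⟩ ⟨hu, hu2⟩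
    have hw : 0 < w u v := huv.elim id fun hvu => hsymm u v ▸ hvu
    have hv := h.eq_zero_of_adj hu hne.symm hw hu2
    exact ⟨hv, h.two_le_valency hv hne (hsymm u v ▸ hw) hu⟩
  intro j
  have hj := hconn.preconnected.of_forall_adj hstep ⟨hi, hvi⟩ j
  have := h.valency_add_eq_two hj.1
  omega

theorem IsAdjunctionSolution.one_le (hsymm : ∀ i j, w i j = w j i)
    (hconn : (SimpleGraph.fromRel (fun i j => 0 < w i j)).Connected)
    (hnotcusp : ¬ ∀ j, valency w j = 2 ∧ p j = 0) {i : V} (hvi : 2 ≤ valency w i)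
    (h : IsAdjunctionSolution w p n e) : 1 ≤ n i :=
  Nat.one_le_iff_ne_zero.2 fun hi => hnotcusp (h.cusp_of_eq_zero hsymm hconn hi hvi)

theorem IsAdjunctionSolution.apply_le_of_le (h₀ : IsAdjunctionSolution w p n₀ e₀)
    (hQ : IsNegDefForm (fun j k => (w j k : ℝ)) (fun j => (e₀ j : ℝ)))
    (h : IsAdjunctionSolution w p n e) (he : e₀ ≤ e) {i : V} (hi : 1 ≤ n i) :
    e i ≤ valency w i + 2 * p i + ∑ k ∈ univ.erase i, w i k * n₀ k := by
  have hn := h₀.le_of_le hQ h he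
  have hsum : ∑ k ∈ univ.erase i, (w i k : ℤ) * n k ≤ ∑ k ∈ univ.erase i, (w i k : ℤ) * n₀ k :=
    sum_le_sum fun k _ => mul_le_mul_of_nonneg_left (by exact_mod_cast hn k) (by positivity)
  have hei : (e i : ℤ) ≤ e i * n i :=
    le_mul_of_one_le_right (by positivity) (by exact_mod_cast hi)
  have := h i
  unfold valency
  zify
  linarith

end Adjunction

theorem stmt_13_general {V : Type*} [Fintype V] [DecidableEq V]
    (w : V → V → ℕ) (hsymm : ∀ i j, w i j = w j i)
    (hconn : (SimpleGraph.fromRel (fun i j => 0 < w i j)).Connected)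
    (p : V → ℕ)
    (hnotcusp : ¬ (∀ j, (∑ k ∈ univ.erase j, w j k) = 2 ∧ p j = 0))
    (i : V) (hvi : 2 ≤ ∑ k ∈ univ.erase i, w i k) :
    {m : ℕ | ∃ n e : V → ℕ, (∀ j, 1 ≤ e j) ∧
      (∀ j, (e j : ℤ) * n j = (∑ k ∈ univ.erase j, (w j k : ℤ)) + 2 * p j - 2
        + ∑ k ∈ univ.erase j, (w j k : ℤ) * n k) ∧
      (∀ x : V → ℝ, x ≠ 0 →
        ∑ j, x j * (-(e j : ℝ) * x j + ∑ k ∈ univ.erase j, (w j k : ℝ) * x k) < 0) ∧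
      e i = m}.Finite := by
  have hbdd := bddAbove_image_of_bddAbove_image_inter_Ici (f := fun e : V → ℕ => e i)
    (s := {e | ∃ n, IsAdjunctionSolution w p n e ∧
      IsNegDefForm (fun j k => (w j k : ℝ)) (fun j => (e j : ℝ))}) ?_
  · refine hbdd.finite.subset ?_
    rintro _ ⟨n, e, -, h, hQ, rfl⟩
    exact ⟨e, ⟨n, h, hQ⟩, rfl⟩
  rintro e₀ ⟨n₀, h₀, hQ₀⟩
  refine ⟨valency w i + 2 * p i + ∑ k ∈ univ.erase i, w i k * n₀ k, ?_⟩
  rintro _ ⟨e, ⟨⟨n, h, -⟩, he⟩, rfl⟩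
  exact h₀.apply_le_of_le hQ₀ h he (h.one_le hsymm hconn hnotcusp hvi)

/-- If `(Γ, p)` is not a cusp graph and the vertex `i` has valency at least 2, then
`e i` takes only finitely many values among solutions `(n, e)` of the adjunction system
with negative definite intersection form. -/
theorem stmt_13 {V : Type*} [Fintype V] [DecidableEq V]
    (w : V → V → ℕ) (hsymm : ∀ i j, w i j = w j i) (hdiag : ∀ i, w i i = 0)
    (hconn : (SimpleGraph.fromRel (fun i j => 0 < w i j)).Connected)
    (p : V → ℕ)
    (hnotcusp : ¬ (∀ j, (∑ k ∈ univ.erase j, w j k) = 2 ∧ p j = 0))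
    (i : V) (hvi : 2 ≤ ∑ k ∈ univ.erase i, w i k) :
    {m : ℕ | ∃ n e : V → ℕ, (∀ j, 1 ≤ e j) ∧
      (∀ j, (e j : ℤ) * n j = (∑ k ∈ univ.erase j, (w j k : ℤ)) + 2 * p j - 2
        + ∑ k ∈ univ.erase j, (w j k : ℤ) * n k) ∧
      (∀ x : V → ℝ, x ≠ 0 →
        ∑ j, x j * (-(e j : ℝ) * x j + ∑ k ∈ univ.erase j, (w j k : ℝ) * x k) < 0) ∧
      e i = m}.Finite :=
  stmt_13_general w hsymm hconn p hnotcusp i hvi
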